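/- For every prime p ≥ 5 and every integer n ≥ 1, there is no integer e with ρ(2n−1) < e ≤ ρ(2n) such that (2p²−2)·e ≡ 2p−2 (mod 2p^{2n}). (This is the arithmetic fact, from the proof of Lemma 7.8 of Ausoni–Rognes, ruling out classes μ₂^i (tμ₂)^e with v_p(i) ≥ 2n in the total degree of y = (tμ₂)^{ρ(2n−1)} μ₂^j with v_p(j) = 2n−2.) -/
import Mathlib


/-- The Ausoni–Rognes numerical function ρ (as a function of the prime `p` and
the argument `m`): `ρ(2k−1) = ∑_{i=0}^{2k} (−1)^i p^{2k−i}` and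
`ρ(2k) = ∑_{j=1}^{k} p^{2j}`, so that `ρ(0) = 0`. -/
def rho (p m : ℕ) : ℤ :=
  if m % 2 = 1 then ∑ i ∈ Finset.range (m + 2), (-1 : ℤ) ^ i * (p : ℤ) ^ (m + 1 - i)
  else ∑ j ∈ Finset.range (m / 2), (p : ℤ) ^ (2 * (j + 1))

lemma rho_odd_mul (p k : ℕ) :
    ((p : ℤ) + 1) * rho p (2 * k + 1) = (p : ℤ) ^ (2 * k + 3) + 1 := by
  have hmod : (2 * k + 1) % 2 = 1 := by omega
  rw [rho, if_pos hmod]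
  have hsum : ∑ i ∈ Finset.range (2 * k + 1 + 2), (-1 : ℤ) ^ i * (p : ℤ) ^ (2 * k + 1 + 1 - i)
      = ∑ i ∈ Finset.range (2 * k + 3), (-(p : ℤ)) ^ i := by
    rw [← Finset.sum_range_reflect (fun i => (-(p : ℤ)) ^ i) (2 * k + 3)]
    apply Finset.sum_congr rfl
    intro i hi
    rw [Finset.mem_range] at hi
    have h1 : 2 * k + 3 - 1 - i = 2 * k + 1 + 1 - i := by omega
    rw [h1]
    conv_rhs => rw [neg_pow]
    rcases Nat.even_or_odd i with h | h
    · have h' : Even (2 * k + 1 + 1 - i) := by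
        rw [Nat.even_iff] at h ⊢; omega
      rw [h.neg_one_pow, h'.neg_one_pow]
    · have h' : Odd (2 * k + 1 + 1 - i) := by
        rw [Nat.odd_iff] at h ⊢; omega
      rw [h.neg_one_pow, h'.neg_one_pow]
  rw [hsum]
  have h := geom_sum_mul (-(p : ℤ)) (2 * k + 3)
  have hodd : (-(p : ℤ)) ^ (2 * k + 3) = -((p : ℤ) ^ (2 * k + 3)) := by
    rw [neg_pow, neg_one_pow_eq_pow_mod_two]
    have : (2 * k + 3) % 2 = 1 := by omega
    rw [this]; ring
  rw [hodd] at h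
  linear_combination -h

lemma rho_even_mul (p k : ℕ) :
    ((p : ℤ) ^ 2 - 1) * rho p (2 * k + 2) = (p : ℤ) ^ (2 * k + 4) - (p : ℤ) ^ 2 := by
  have hmod : ¬ (2 * k + 2) % 2 = 1 := by omega
  rw [rho, if_neg hmod]
  have hdiv : (2 * k + 2) / 2 = k + 1 := by omega
  rw [hdiv]
  have hsum : ∑ j ∈ Finset.range (k + 1), (p : ℤ) ^ (2 * (j + 1))
      = (∑ j ∈ Finset.range (k + 1), ((p : ℤ) ^ 2) ^ j) * (p : ℤ) ^ 2 := by
    rw [Finset.sum_mul]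
    apply Finset.sum_congr rfl
    intro j _
    ring
  rw [hsum]
  have h := geom_sum_mul ((p : ℤ) ^ 2) (k + 1)
  have hpow : ((p : ℤ) ^ 2) ^ (k + 1) = (p : ℤ) ^ (2 * k + 2) := by ring
  rw [hpow] at h
  linear_combination (p : ℤ) ^ 2 * h

theorem no_e_lemma_7_8_c (p : ℕ) (hp : p.Prime) (h5 : 5 ≤ p)
    (n : ℕ) (hn : 1 ≤ n) :
    ¬ ∃ e : ℤ, rho p (2 * n - 1) < e ∧ e ≤ rho p (2 * n) ∧
      (2 * (p : ℤ) ^ 2 - 2) * e ≡ 2 * (p : ℤ) - 2 [ZMOD 2 * (p : ℤ) ^ (2 * n)] := by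
  obtain ⟨k, rfl⟩ : ∃ k, n = k + 1 := ⟨n - 1, by omega⟩
  have h1 : 2 * (k + 1) - 1 = 2 * k + 1 := by omega
  have h2 : 2 * (k + 1) = 2 * k + 2 := by omega
  rw [h1, h2]
  rintro ⟨e, he1, he2, he3⟩
  have hP : (5 : ℤ) ≤ (p : ℤ) := by exact_mod_cast h5
  have hQ : (1 : ℤ) ≤ (p : ℤ) ^ (2 * k + 2) := one_le_pow₀ (by linarith)
  -- divisibility
  have hd : (2 * (p : ℤ) ^ (2 * k + 2)) ∣ (2 * (p : ℤ) - 2) - (2 * (p : ℤ) ^ 2 - 2) * e :=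
    he3.dvd
  obtain ⟨c, hc⟩ := hd
  have hd2 : (p : ℤ) ^ (2 * k + 2) ∣ ((p : ℤ) - 1) * (((p : ℤ) + 1) * e - 1) := by
    refine ⟨-c, mul_left_cancel₀ (two_ne_zero) ?_⟩
    linear_combination -hc
  have hco1' : IsCoprime ((p : ℤ)) ((p : ℤ) - 1) := ⟨1, -1, by ring⟩
  have hco1 : IsCoprime ((p : ℤ) ^ (2 * k + 2)) ((p : ℤ) - 1) := hco1'.pow_left
  have hd3 : (p : ℤ) ^ (2 * k + 2) ∣ ((p : ℤ) + 1) * e - 1 :=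
    hco1.dvd_of_dvd_mul_left hd2
  obtain ⟨d, hdd⟩ := hd3
  have hd4 : (p : ℤ) ^ (2 * k + 2) ∣ ((p : ℤ) + 1) * (e - rho p (2 * k + 1)) :=
    ⟨d - (p : ℤ), by linear_combination hdd - rho_odd_mul p k⟩
  have hco2' : IsCoprime ((p : ℤ)) ((p : ℤ) + 1) := ⟨-1, 1, by ring⟩
  have hco2 : IsCoprime ((p : ℤ) ^ (2 * k + 2)) ((p : ℤ) + 1) := hco2'.pow_left
  have hd5 : (p : ℤ) ^ (2 * k + 2) ∣ e - rho p (2 * k + 1) :=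
    hco2.dvd_of_dvd_mul_left hd4
  have hle : (p : ℤ) ^ (2 * k + 2) ≤ e - rho p (2 * k + 1) :=
    Int.le_of_dvd (by linarith) hd5
  -- key inequality
  have key : ((p : ℤ) ^ 2 - 1) *
      (rho p (2 * k + 1) + (p : ℤ) ^ (2 * k + 2) - rho p (2 * k + 2)) =
      (p : ℤ) ^ (2 * k + 2) * ((p : ℤ) ^ 2 - (p : ℤ) - 1) + ((p : ℤ) ^ 2 + (p : ℤ) - 1) := by
    linear_combination ((p : ℤ) - 1) * rho_odd_mul p k - rho_even_mul p k
  have h6 : rho p (2 * k + 1) + (p : ℤ) ^ (2 * k + 2) - rho p (2 * k + 2) ≤ 0 := by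
    linarith
  have h7 : ((p : ℤ) ^ 2 - 1) *
      (rho p (2 * k + 1) + (p : ℤ) ^ (2 * k + 2) - rho p (2 * k + 2)) ≤ 0 :=
    mul_nonpos_of_nonneg_of_nonpos (by nlinarith) h6
  have h8 : (19 : ℤ) ≤ (p : ℤ) ^ 2 - (p : ℤ) - 1 := by nlinarith
  nlinarith [key, h7, hQ, h8, hP]
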